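/- The Fischer graph of a non-sofic S-gap shift X_S does not contain an eventually geodesic strictly proximal pair of bi-infinite paths; consequently every non-sofic S-gap shift is topologically direct prime. -/

import Mathlib

namespace Paper

variable {A B C : Type*}

def shiftMap (x : ℤ → A) : ℤ → A := fun i => x (i + 1)

def shiftInvMap (x : ℤ → A) : ℤ → A := fun i => x (i - 1)

/-- A subshift: nonempty, shift-invariant (both directions), and closed
(expressed combinatorially: any configuration all of whose central patterns
are approximated by members is a member). -/
def IsSubshift (X : Set (ℤ → A)) : Prop :=
  X.Nonempty ∧ (∀ x ∈ X, shiftMap x ∈ X) ∧ (∀ x ∈ X, shiftInvMap x ∈ X) ∧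
  ∀ x : ℤ → A, (∀ n : ℕ, ∃ y ∈ X, ∀ i : ℤ, |i| ≤ (n : ℤ) → y i = x i) → x ∈ X

/-- The word `x[i, i+k-1]`. -/
def cfgWord (x : ℤ → A) (i : ℤ) (k : ℕ) : List A :=
  List.ofFn (fun t : Fin k => x (i + ((t : ℕ) : ℤ)))

/-- The language of a set of configurations. -/
def lang (X : Set (ℤ → A)) : Set (List A) := {w | ∃ x ∈ X, ∃ i : ℤ, cfgWord x i w.length = w}

def TransitiveShift (X : Set (ℤ → A)) : Prop :=
  ∀ u ∈ lang X, ∀ v ∈ lang X, ∃ w : List A, u ++ w ++ v ∈ lang X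

/-- Left ray of a configuration: `leftRay x n = x (-1-n)`. -/
def leftRay (x : ℤ → A) : ℕ → A := fun n => x (-1 - (n : ℤ))

def rightRay (x : ℤ → A) : ℕ → A := fun n => x (n : ℤ)

def LeftRays (X : Set (ℤ → A)) : Set (ℕ → A) := leftRay '' X

def RightRays (X : Set (ℤ → A)) : Set (ℕ → A) := rightRay '' X

/-- Glue a left ray and a right ray into a configuration. -/
def glue (l r : ℕ → A) : ℤ → A := fun i => if 0 ≤ i then r i.toNat else l (-1 - i).toNat

/-- Follower set of a left-infinite sequence. -/
def foll (X : Set (ℤ → A)) (l : ℕ → A) : Set (ℕ → A) := {r | glue l r ∈ X}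

def wordThen (w : List A) (r : ℕ → A) : ℕ → A :=
  fun n => if h : n < w.length then w.get ⟨n, h⟩ else r (n - w.length)

/-- Follower set of a word. -/
def follW (X : Set (ℤ → A)) (w : List A) : Set (ℕ → A) := {r | wordThen w r ∈ RightRays X}

def occursInLeft (l : ℕ → A) (w : List A) : Prop :=
  ∃ j : ℕ, ∀ k : Fin w.length, l (j + (w.length - 1 - (k : ℕ))) = w.get k

/-- The language of a left-infinite sequence. -/
def langL (l : ℕ → A) : Set (List A) := {w | occursInLeft l w}

/-- The left ray `l` ends with the word `w`. -/
def raySuffix (l : ℕ → A) (w : List A) : Prop :=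
  ∀ k : Fin w.length, l (w.length - 1 - (k : ℕ)) = w.get k

def HalfSyncWord (X : Set (ℤ → A)) (w : List A) : Prop :=
  w ∈ lang X ∧ ∃ l ∈ LeftRays X, raySuffix l w ∧ langL l = lang X ∧ foll X l = follW X w

def HalfSynchronized (X : Set (ℤ → A)) : Prop := TransitiveShift X ∧ ∃ w, HalfSyncWord X w

def SyncWord (X : Set (ℤ → A)) (w : List A) : Prop :=
  w ∈ lang X ∧ ∀ l ∈ LeftRays X, raySuffix l w → foll X l = follW X w

def Synchronized (X : Set (ℤ → A)) : Prop := TransitiveShift X ∧ ∃ w, SyncWord X w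

/-- Product of two subshifts, over the product alphabet. -/
def prodShift (Y : Set (ℤ → B)) (Z : Set (ℤ → C)) : Set (ℤ → B × C) :=
  {x | (fun i => (x i).1) ∈ Y ∧ (fun i => (x i).2) ∈ Z}

/-- Identification of a pair of sets of right rays with a set of right rays
over the product alphabet. -/
def prodRaySet (S : Set (ℕ → B)) (T : Set (ℕ → C)) : Set (ℕ → B × C) :=
  {r | (fun n => (r n).1) ∈ S ∧ (fun n => (r n).2) ∈ T}

/-- Extend a left ray by one more symbol on the right. -/
def extendRay (l : ℕ → A) (a : A) : ℕ → A := fun n => if n = 0 then a else l (n - 1)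

/-- Edge of the Krieger graph from `u` to `v` labeled `a`. -/
def KEdge (X : Set (ℤ → A)) (u : Set (ℕ → A)) (a : A) (v : Set (ℕ → A)) : Prop :=
  ∃ l ∈ LeftRays X, extendRay l a ∈ LeftRays X ∧ u = foll X l ∧ v = foll X (extendRay l a)

def KStep (X : Set (ℤ → A)) (u v : Set (ℕ → A)) : Prop := ∃ a, KEdge X u a v

/-- Existence of a finite path in the Krieger graph. -/
def KReach (X : Set (ℤ → A)) : Set (ℕ → A) → Set (ℕ → A) → Prop :=
  Relation.ReflTransGen (KStep X)

def KVertex (X : Set (ℤ → A)) (v : Set (ℕ → A)) : Prop := ∃ l ∈ LeftRays X, v = foll X l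

/-- A subshift is sofic iff it has finitely many follower sets. -/
def Sofic (X : Set (ℤ → A)) : Prop := {v : Set (ℕ → A) | KVertex X v}.Finite

/-- Vertex of the Fischer graph (w.r.t. half-synchronizing word `w`): a vertex of the
Krieger graph in the maximal strongly connected subgraph containing `foll w`. -/
def FVertex (X : Set (ℤ → A)) (w : List A) (v : Set (ℕ → A)) : Prop :=
  KVertex X v ∧ KReach X (follW X w) v ∧ KReach X v (follW X w)

/-- Directed (multi)graph with vertex type `V` and edge type `E`. -/
structure DiGraph (V : Type*) (E : Type*) where
  ini : E → V
  ter : E → V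

variable {V E V' E' : Type*}

/-- Bi-infinite path on a graph. -/
def BiPath (G : DiGraph V E) (x : ℤ → E) : Prop := ∀ i : ℤ, G.ter (x i) = G.ini (x (i + 1))

/-- `p` is a finite path of `m+1` edges. -/
def FinPath (G : DiGraph V E) (m : ℕ) (p : Fin (m + 1) → E) : Prop :=
  ∀ k : Fin m, G.ter (p k.castSucc) = G.ini (p k.succ)

/-- The subpath `x[i, i+n]` of a bi-infinite path is a shortest path between its endpoints. -/
def GeodesicSeg (G : DiGraph V E) (x : ℤ → E) (i : ℤ) (n : ℕ) : Prop :=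
  ∀ (m : ℕ) (p : Fin (m + 1) → E), FinPath G m p →
    G.ini (p 0) = G.ini (x i) → G.ter (p (Fin.last m)) = G.ter (x (i + (n : ℤ))) → n ≤ m

def EvGeodesic (G : DiGraph V E) (x : ℤ → E) : Prop :=
  ∃ i₀ : ℤ, ∀ i : ℤ, i₀ ≤ i → ∀ n : ℕ, GeodesicSeg G x i n

/-- Strictly proximal pair of bi-infinite paths. -/
def StrictProxPair (x y : ℤ → E) : Prop :=
  (∀ n : ℕ, ∃ i : ℕ, ∀ k : ℕ, k ≤ n → x ((i : ℤ) + (k : ℤ)) = y ((i : ℤ) + (k : ℤ))) ∧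
  ∀ N : ℕ, ∃ i : ℕ, N ≤ i ∧ x ((i : ℕ) : ℤ) ≠ y ((i : ℕ) : ℤ)

def HasEvGeoProxPair (G : DiGraph V E) : Prop :=
  ∃ x y : ℤ → E, BiPath G x ∧ BiPath G y ∧ EvGeodesic G x ∧ EvGeodesic G y ∧ StrictProxPair x y

/-- Edges of the Fischer graph: Krieger edges between Fischer vertices. -/
def FischerE (X : Set (ℤ → A)) (w : List A) : Type _ :=
  {t : Set (ℕ → A) × A × Set (ℕ → A) //
    FVertex X w t.1 ∧ FVertex X w t.2.2 ∧ KEdge X t.1 t.2.1 t.2.2}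

def FischerGraph (X : Set (ℤ → A)) (w : List A) : DiGraph (Set (ℕ → A)) (FischerE X w) :=
  ⟨fun e => e.1.1, fun e => e.1.2.2⟩

def SlidingBlockCode (X : Set (ℤ → A)) (F : (ℤ → A) → (ℤ → B)) : Prop :=
  ∃ (r : ℕ) (f : (Fin (2 * r + 1) → A) → B),
    ∀ x ∈ X, ∀ i : ℤ, F x i = f (fun k => x (i + ((k : ℕ) : ℤ) - (r : ℤ)))

def ShiftConjugate (X : Set (ℤ → A)) (Y : Set (ℤ → B)) : Prop :=
  ∃ F : (ℤ → A) → (ℤ → B), SlidingBlockCode X F ∧ Set.InjOn F X ∧ F '' X = Y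

def DirectPrime (X : Set (ℤ → A)) : Prop :=
  ∀ (B C : Type) (_ : Finite B) (_ : Finite C) (Y : Set (ℤ → B)) (Z : Set (ℤ → C)),
    IsSubshift Y → IsSubshift Z → ShiftConjugate X (prodShift Y Z) →
    (∃ y, Y = {y}) ∨ (∃ z, Z = {z})

def SgapBlocks (S : Set ℕ) : Set (List Bool) :=
  {w | ∃ s ∈ S, w = false :: List.replicate s true}

def SgapCats (S : Set ℕ) : Set (List Bool) :=
  {w | ∃ l : List (List Bool), (∀ b ∈ l, b ∈ SgapBlocks S) ∧ w = l.flatten}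

def SgapLang (S : Set ℕ) : Set (List Bool) :=
  {w | ∃ u v c, c ∈ SgapCats S ∧ c = u ++ w ++ v}

/-- The `S`-gap shift (`0` is `false`, `1` is `true`). -/
def Sgap (S : Set ℕ) : Set (ℤ → Bool) :=
  {x | ∀ (i : ℤ) (k : ℕ), cfgWord x i k ∈ SgapLang S}

/-!
Points of `X_S` are exactly the configurations in which every gap between consecutive `0`s lies
in `S` and every run of `1`s is bounded by an element of `S`. Since `0` is synchronizing, the
follower set of a left ray depends only on the length `k` of its final run `0 1^k`; in particular
all `0`-labelled edges of the Fischer graph end at one vertex. No vertex repeats along an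
eventually geodesic path, so such a path eventually reads only `1`s; as the Krieger graph is
right-resolving, two such paths that meet once agree from then on, so they are not strictly
proximal.

For direct primeness let `F : X_S → Y × Z` be a conjugacy and `(b, c)` the image of the fixed
point `1^ℤ`. Non-soficity makes `S` unbounded, so points with finitely many `0`s are dense; if
`b` were the only point of `Y` homoclinic to `b`, all of `X_S` would map into `{b} × Z` and `Y`
would be trivial. Otherwise pick nontrivial homoclinic `y ∈ Y`, `z ∈ Z`. The inverse of `F` is
again a sliding block code, so the preimage of `(y (· - N), z)` agrees with the preimage of
`(b, z)` on the left and with the translated preimage of `(y, c)` on the right. The gap between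
these two clusters of `0`s has length `N + const`, so `S` is cofinite and `X_S` would be sofic.
-/

section Rays

variable {A : Type*}

def translate (n : ℤ) (x : ℤ → A) : ℤ → A := fun i => x (i + n)

def ShiftInvariant (X : Set (ℤ → A)) : Prop := ∀ x ∈ X, ∀ n : ℤ, translate n x ∈ X

@[simp] lemma translate_apply (n : ℤ) (x : ℤ → A) (i : ℤ) : translate n x i = x (i + n) := rfl

lemma translate_zero (x : ℤ → A) : translate 0 x = x := by
  funext i
  simp

lemma translate_translate (m n : ℤ) (x : ℤ → A) :
    translate m (translate n x) = translate (m + n) x := by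
  funext i
  simp [add_assoc]

lemma glue_of_nonneg (l r : ℕ → A) {i : ℤ} (hi : 0 ≤ i) : glue l r i = r i.toNat := by
  simp [glue, hi]

lemma glue_of_neg (l r : ℕ → A) {i : ℤ} (hi : i < 0) : glue l r i = l (-1 - i).toNat := by
  simp [glue, not_le.2 hi]

@[simp] lemma glue_natCast (l r : ℕ → A) (n : ℕ) : glue l r n = r n := by
  simp [glue]

lemma glue_leftRay_of_neg (x : ℤ → A) (r : ℕ → A) {i : ℤ} (hi : i < 0) :
    glue (leftRay x) r i = x i := by
  rw [glue_of_neg _ _ hi, leftRay]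
  congr 1
  omega

lemma glue_extendRay (l r : ℕ → A) (a : A) :
    glue (extendRay l a) r = translate 1 (glue l (extendRay r a)) := by
  funext i
  rcases lt_trichotomy i (-1) with hi | rfl | hi
  · rw [glue_of_neg _ _ (by omega), translate_apply, glue_of_neg _ _ (by omega), extendRay,
      if_neg (by omega)]
    congr 1
    omega
  · rfl
  · rw [glue_of_nonneg _ _ (by omega), translate_apply, glue_of_nonneg _ _ (by omega), extendRay,
      if_neg (by omega)]
    congr 1
    omega

end Rays

section CfgWord

variable {A : Type*}

@[simp] lemma length_cfgWord (x : ℤ → A) (i : ℤ) (k : ℕ) : (cfgWord x i k).length = k := by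
  simp [cfgWord]

lemma getD_cfgWord (x : ℤ → A) (i : ℤ) {k t : ℕ} (ht : t < k) (d : A) :
    (cfgWord x i k).getD t d = x (i + t) := by
  simp [cfgWord, ht]

lemma cfgWord_add (x : ℤ → A) (i : ℤ) (a b : ℕ) :
    cfgWord x i (a + b) = cfgWord x i a ++ cfgWord x (i + a) b := by
  simp only [cfgWord, List.ofFn_add]
  congr 2
  funext t
  simp only [Fin.natAdd]
  push_cast
  ring_nf

lemma cfgWord_succ (x : ℤ → A) (i : ℤ) (k : ℕ) :
    cfgWord x i (k + 1) = x i :: cfgWord x (i + 1) k := by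
  simp only [cfgWord, List.ofFn_succ]
  simp only [Fin.val_zero, Nat.cast_zero, add_zero, Fin.val_succ, Nat.cast_succ]
  congr 2
  funext t
  ring_nf

lemma cfgWord_eq_replicate (x : ℤ → A) (i : ℤ) (k : ℕ) (a : A)
    (h : ∀ t : ℕ, t < k → x (i + t) = a) : cfgWord x i k = List.replicate k a := by
  simp [cfgWord, h]

lemma cfgWord_congr {x x' : ℤ → A} {i i' : ℤ} {k : ℕ}
    (h : ∀ t : ℕ, t < k → x (i + t) = x' (i' + t)) : cfgWord x i k = cfgWord x' i' k := by
  simp only [cfgWord, List.ofFn_inj]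
  funext t
  exact h t t.2

end CfgWord

section KriegerGraph

variable {A : Type*} {X : Set (ℤ → A)}

lemma mem_foll_extendRay (hX : ShiftInvariant X) (l r : ℕ → A) (a : A) :
    r ∈ foll X (extendRay l a) ↔ extendRay r a ∈ foll X l := by
  simp only [foll, Set.mem_ofPred_eq, glue_extendRay]
  refine ⟨fun h => ?_, fun h => hX _ h 1⟩
  simpa [translate_translate, translate_zero] using hX _ h (-1)

lemma KEdge.right_unique (hX : ShiftInvariant X) {u v v' : Set (ℕ → A)} {a : A}
    (h : KEdge X u a v) (h' : KEdge X u a v') : v = v' := by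
  obtain ⟨l, -, -, rfl, rfl⟩ := h
  obtain ⟨l', -, -, hl, rfl⟩ := h'
  ext r
  rw [mem_foll_extendRay hX, mem_foll_extendRay hX, hl]

lemma FischerE.ext_of_ini_label (hX : ShiftInvariant X) {w : List A}
    {e e' : FischerE X w} (hini : e.1.1 = e'.1.1) (hlabel : e.1.2.1 = e'.1.2.1) : e = e' := by
  have he := e.2.2.2
  rw [hini, hlabel] at he
  exact Subtype.ext (Prod.ext hini (Prod.ext hlabel (he.right_unique hX e'.2.2.2)))

end KriegerGraph

section Geodesics

variable {V E : Type*} {G : DiGraph V E} {x : ℤ → E}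

lemma GeodesicSeg.ini_ne {i : ℤ} {n : ℕ} (h : GeodesicSeg G x i (n + 1)) :
    G.ini (x i) ≠ G.ini (x (i + (n + 1 : ℕ))) := fun heq => by
  have := h 0 (fun _ => x (i + (n + 1 : ℕ))) (fun k => k.elim0) heq.symm rfl
  omega

lemma EvGeodesic.eventually_ini_injective (h : EvGeodesic G x) :
    ∃ i₀ : ℤ, ∀ i j, i₀ ≤ i → i < j → G.ini (x i) ≠ G.ini (x j) := by
  obtain ⟨i₀, hgeo⟩ := h
  refine ⟨i₀, fun i j hi hij => ?_⟩
  obtain ⟨n, rfl⟩ : ∃ n : ℕ, j = i + (n + 1 : ℕ) := ⟨(j - i - 1).toNat, by omega⟩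
  exact (hgeo i hi (n + 1)).ini_ne

lemma BiPath.eqOn_of_label_eq {A : Type*} {X : Set (ℤ → A)} {w : List A}
    (hX : ShiftInvariant X) {x y : ℤ → FischerE X w}
    (hx : BiPath (FischerGraph X w) x) (hy : BiPath (FischerGraph X w) y) {p : ℤ}
    (hp : x p = y p) (hlabel : ∀ i, p ≤ i → (x i).1.2.1 = (y i).1.2.1) :
    ∀ i, p ≤ i → x i = y i := by
  intro i hi
  induction i, hi using Int.leInduction with
  | base => exact hp
  | succ i hi ih =>
    refine FischerE.ext_of_ini_label hX ?_ (hlabel _ (by omega))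
    have h := hx i
    rw [ih, hy i] at h
    exact h.symm

end Geodesics

lemma exists_subseq_eventually_eqOn {α : Type*} [Finite α] (y : ℕ → ℤ → α) :
    ∃ (w : ℤ → α) (φ : ℕ → ℕ), StrictMono φ ∧
      ∀ K : ℕ, ∃ N, ∀ k ≥ N, ∀ i : ℤ, |i| ≤ K → y (φ k) i = w i := by
  let _ : TopologicalSpace α := ⊥
  have : DiscreteTopology α := ⟨rfl⟩
  obtain ⟨w, -, φ, hφ, hlim⟩ := isCompact_univ.tendsto_subseq (x := y) fun n => Set.mem_univ _
  refine ⟨w, φ, hφ, fun K => ?_⟩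
  have hev : ∀ᶠ k in Filter.atTop, ∀ i ∈ Finset.Icc (-(K : ℤ)) K, y (φ k) i = w i := by
    rw [Filter.eventually_all_finset]
    intro i _
    simpa [nhds_discrete] using tendsto_pi_nhds.1 hlim i
  obtain ⟨N, hN⟩ := Filter.eventually_atTop.1 hev
  exact ⟨N, fun k hk i hi => hN k hk i (Finset.mem_Icc.2 (abs_le.1 hi))⟩

namespace SlidingBlockCode

variable {A B C : Type*} {X : Set (ℤ → A)} {F : (ℤ → A) → ℤ → B}

lemma exists_radius (hF : SlidingBlockCode X F) :
    ∃ r : ℕ, ∀ x ∈ X, ∀ x' ∈ X, ∀ j : ℤ, (∀ i, |i - j| ≤ r → x i = x' i) → F x j = F x' j := by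
  obtain ⟨r, f, hf⟩ := hF
  refine ⟨r, fun x hx x' hx' j h => ?_⟩
  rw [hf x hx, hf x' hx']
  congr 1
  funext k
  exact h _ (by rw [abs_le]; have := k.2; omega)

lemma apply_translate (hF : SlidingBlockCode X F) {x : ℤ → A} (hx : x ∈ X) {n : ℤ}
    (hxn : translate n x ∈ X) : F (translate n x) = translate n (F x) := by
  obtain ⟨r, f, hf⟩ := hF
  funext i
  rw [translate_apply, hf _ hxn, hf _ hx]
  congr 1
  funext k
  simp only [translate_apply]
  ring_nf

lemma apply_const (hF : SlidingBlockCode X F) {a : A} (ha : (fun _ => a) ∈ X) :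
    ∃ b : B, F (fun _ => a) = fun _ => b := by
  obtain ⟨r, f, hf⟩ := hF
  exact ⟨f fun _ => a, funext fun i => hf _ ha i⟩

lemma comp (hF : SlidingBlockCode X F) (g : B → C) : SlidingBlockCode X fun x i => g (F x i) := by
  obtain ⟨r, f, hf⟩ := hF
  exact ⟨r, g ∘ f, fun x hx i => by simp only [hf x hx, Function.comp_apply]⟩

/-- By compactness, the inverse of an injective sliding block code is again a sliding block code;
`R` is its radius. -/
theorem exists_radius_of_injOn [Finite A] (hF : SlidingBlockCode X F) (hinj : X.InjOn F)
    (hclosed : ∀ x, (∀ n : ℕ, ∃ y ∈ X, ∀ i : ℤ, |i| ≤ n → y i = x i) → x ∈ X)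
    (htrans : ShiftInvariant X) :
    ∃ R : ℕ, ∀ x ∈ X, ∀ x' ∈ X, ∀ j : ℤ, (∀ i, |i - j| ≤ R → F x i = F x' i) → x j = x' j := by
  by_contra! hcon
  have hcentred : ∀ R : ℕ, ∃ u ∈ X, ∃ v ∈ X, (∀ i : ℤ, |i| ≤ R → F u i = F v i) ∧ u 0 ≠ v 0 := by
    intro R
    obtain ⟨x, hx, x', hx', j, hagree, hne⟩ := hcon R
    refine ⟨translate j x, htrans x hx j, translate j x', htrans x' hx' j, fun i hi => ?_,
      by simpa using hne⟩
    rw [hF.apply_translate hx (htrans x hx j), hF.apply_translate hx' (htrans x' hx' j)]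
    exact hagree _ (by simpa using hi)
  choose u hu v hv hagree hne using hcentred
  obtain ⟨w, φ, hφ, hlim⟩ := exists_subseq_eventually_eqOn fun R i => (u R i, v R i)
  have ha : (fun i => (w i).1) ∈ X := hclosed _ fun n => by
    obtain ⟨N, hN⟩ := hlim n
    exact ⟨u (φ N), hu _, fun i hi => congrArg Prod.fst (hN N le_rfl i hi)⟩
  have hb : (fun i => (w i).2) ∈ X := hclosed _ fun n => by
    obtain ⟨N, hN⟩ := hlim n
    exact ⟨v (φ N), hv _, fun i hi => congrArg Prod.snd (hN N le_rfl i hi)⟩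
  obtain ⟨r, hr⟩ := hF.exists_radius
  have hab : F (fun i => (w i).1) = F (fun i => (w i).2) := funext fun i => by
    obtain ⟨N, hN⟩ := hlim (i.natAbs + r)
    set k := max N i.natAbs
    have hwin : ∀ m : ℤ, |m - i| ≤ r → u (φ k) m = (w m).1 ∧ v (φ k) m = (w m).2 :=
      fun m hm => Prod.ext_iff.1 (hN k (le_max_left _ _) m (by rw [Int.abs_eq_natAbs] at *; omega))
    have hk : i.natAbs ≤ φ k := (le_max_right _ _).trans (hφ.id_le k)
    calc F (fun i => (w i).1) i = F (u (φ k)) i := hr _ ha _ (hu _) i fun m hm => (hwin m hm).1.symm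
      _ = F (v (φ k)) i := hagree _ i (by rw [Int.abs_eq_natAbs]; omega)
      _ = F (fun i => (w i).2) i := hr _ (hv _) _ hb i fun m hm => (hwin m hm).2
  obtain ⟨N, hN⟩ := hlim 0
  have h0 := Prod.ext_iff.1 (hN N le_rfl 0 (by simp))
  exact hne (φ N) (h0.1.trans ((congrFun (hinj ha hb hab) 0).trans h0.2.symm))

end SlidingBlockCode

lemma IsSubshift.shiftInvariant {A : Type*} {Y : Set (ℤ → A)} (hY : IsSubshift Y) :
    ShiftInvariant Y := by
  obtain ⟨-, hshift, hshiftInv, -⟩ := hY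
  intro y hy n
  induction n using Int.induction_on with
  | zero => rwa [translate_zero]
  | succ n ih =>
    convert hshift _ ih using 1
    funext i
    simp only [translate_apply, shiftMap]
    ring_nf
  | pred n ih =>
    convert hshiftInv _ ih using 1
    funext i
    simp only [translate_apply, shiftInvMap]
    ring_nf

section Products

variable {B C : Type*} {Y : Set (ℤ → B)} {Z : Set (ℤ → C)}

lemma image_fst_prodShift (hZ : Z.Nonempty) : (fun u i => (u i).1) '' prodShift Y Z = Y := by
  obtain ⟨z, hz⟩ := hZ
  ext y
  exact ⟨fun ⟨_, hu, hy⟩ => hy ▸ hu.1, fun hy => ⟨fun i => (y i, z i), ⟨hy, hz⟩, rfl⟩⟩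

lemma image_snd_prodShift (hY : Y.Nonempty) : (fun u i => (u i).2) '' prodShift Y Z = Z := by
  obtain ⟨y, hy⟩ := hY
  ext z
  exact ⟨fun ⟨_, hu, hz⟩ => hz ▸ hu.2, fun hz => ⟨fun i => (y i, z i), ⟨hy, hz⟩, rfl⟩⟩

end Products

def HasGapsIn (S : Set ℕ) (x : ℤ → Bool) : Prop :=
  ∀ i j : ℤ, i < j → x i = false → x j = false → (∀ m, i < m → m < j → x m = true) →
    (j - i - 1).toNat ∈ S

def HasRunsBoundedBy (S : Set ℕ) (x : ℤ → Bool) : Prop :=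
  ∀ (i : ℤ) (L : ℕ), (∀ t : ℕ, t < L → x (i + t) = true) → ∃ s ∈ S, L ≤ s

def zeroAt (p : ℤ) : ℤ → Bool := fun i => decide (i ≠ p)

/-- The left ray `l` ends in `0 1^k`. -/
def LastZeroAt (l : ℕ → Bool) (k : ℕ) : Prop := l k = false ∧ ∀ n < k, l n = true

lemma lastZeroAt_or_eq_true (l : ℕ → Bool) : (∃ k, LastZeroAt l k) ∨ l = fun _ => true := by
  classical
  by_cases h : ∃ k, l k = false
  · exact Or.inl ⟨Nat.find h, Nat.find_spec h, fun n hn =>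
      Bool.not_eq_false _ ▸ Nat.find_min h hn⟩
  · push Not at h
    exact Or.inr (funext fun n => Bool.not_eq_false _ ▸ h n)

lemma lastZeroAt_extendRay_false (l : ℕ → Bool) : LastZeroAt (extendRay l false) 0 :=
  ⟨rfl, fun _ hn => absurd hn (Nat.not_lt_zero _)⟩

lemma lastZeroAt_leftRay_zeroAt (k : ℕ) : LastZeroAt (leftRay (zeroAt (-1 - (k : ℤ)))) k :=
  ⟨by simp [leftRay, zeroAt], fun n hn => by simp [leftRay, zeroAt]; omega⟩

def EventuallyPeriodic (S : Set ℕ) : Prop := ∃ j d : ℕ, 0 < d ∧ ∀ k ≥ j, k ∈ S ↔ k + d ∈ S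

namespace Sgap

variable {S : Set ℕ}

section Language

variable {x : ℤ → Bool}

lemma getD_block_append (s p : ℕ) (c : List Bool) :
    (false :: List.replicate s true ++ c).getD p true =
      if p = 0 then false else if p ≤ s then true else c.getD (p - s - 1) true := by
  rcases p with _ | p
  · rfl
  · rw [List.cons_append, List.getD_cons_succ]
    by_cases hp : p < s
    · rw [List.getD_append _ _ _ _ (by simpa using hp), List.getD_replicate _ hp]
      simp [show p + 1 ≤ s by omega]
    · rw [List.getD_append_right _ _ _ _ (by simp; omega)]
      simp [show ¬ p + 1 ≤ s by omega, show p - s = p + 1 - s - 1 by omega]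

lemma getD_flatten_blocks_zero {l : List (List Bool)} (hl : ∀ b ∈ l, b ∈ SgapBlocks S)
    (h : 0 < l.flatten.length) : l.flatten.getD 0 true = false := by
  rcases l with _ | ⟨b, bs⟩
  · simp at h
  · obtain ⟨s, -, rfl⟩ := hl b List.mem_cons_self
    rfl

lemma gap_mem_of_flatten_blocks : ∀ {l : List (List Bool)}, (∀ b ∈ l, b ∈ SgapBlocks S) →
    ∀ {p q : ℕ}, p < q → q < l.flatten.length → l.flatten.getD p true = false →
      l.flatten.getD q true = false → (∀ m, p < m → m < q → l.flatten.getD m true = true) →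
      q - p - 1 ∈ S
  | [], _, _, _, _, hq, _, _, _ => by simp at hq
  | b :: bs, hl, p, q, hpq, hq, hp, hq0, hbet => by
    obtain ⟨s, hs, rfl⟩ := hl b List.mem_cons_self
    have hbs : ∀ b ∈ bs, b ∈ SgapBlocks S := fun b hb => hl b (List.mem_cons_of_mem _ hb)
    simp only [List.flatten_cons, getD_block_append] at hp hq0 hbet
    simp only [List.flatten_cons, List.length_append, List.length_cons,
      List.length_replicate] at hq
    by_cases hps : s < p
    · have key := gap_mem_of_flatten_blocks hbs (p := p - s - 1) (q := q - s - 1) (by omega)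
        (by omega) (by simpa [show p ≠ 0 by omega, show ¬ p ≤ s by omega] using hp)
        (by simpa [show q ≠ 0 by omega, show ¬ q ≤ s by omega] using hq0)
        (fun m h1 h2 => by
          simpa [show m + s + 1 ≠ 0 by omega, show ¬ m + s + 1 ≤ s by omega,
            show m + s + 1 - s - 1 = m by omega] using hbet (m + s + 1) (by omega) (by omega))
      rwa [show q - s - 1 - (p - s - 1) - 1 = q - p - 1 by omega] at key
    · have hp0 : p = 0 := by by_contra h; simp [h, show p ≤ s by omega] at hp
      have hqs : s < q := by by_contra h; simp [show q ≠ 0 by omega, show q ≤ s by omega] at hq0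
      have hq1 : q = s + 1 := by
        by_contra h
        have h1 := hbet (s + 1) (by omega) (by omega)
        simp only [show s + 1 ≠ 0 by omega, show ¬ s + 1 ≤ s by omega, if_false,
          show s + 1 - s - 1 = 0 by omega] at h1
        rw [getD_flatten_blocks_zero hbs (by omega)] at h1
        exact Bool.false_ne_true h1
      rwa [hq1, hp0]

lemma run_le_of_flatten_blocks : ∀ {l : List (List Bool)}, (∀ b ∈ l, b ∈ SgapBlocks S) →
    ∀ {p L : ℕ}, p + L ≤ l.flatten.length →
      (∀ m, p ≤ m → m < p + L → l.flatten.getD m true = true) → L = 0 ∨ ∃ s ∈ S, L ≤ s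
  | [], _, _, _, hlen, _ => by simp at hlen; omega
  | b :: bs, hl, p, L, hlen, hrun => by
    obtain ⟨s, hs, rfl⟩ := hl b List.mem_cons_self
    have hbs : ∀ b ∈ bs, b ∈ SgapBlocks S := fun b hb => hl b (List.mem_cons_of_mem _ hb)
    simp only [List.flatten_cons, getD_block_append] at hrun
    simp only [List.flatten_cons, List.length_append, List.length_cons,
      List.length_replicate] at hlen
    rcases Nat.eq_zero_or_pos L with hL | hL
    · exact Or.inl hL
    by_cases hps : s < p
    · exact run_le_of_flatten_blocks hbs (p := p - s - 1) (by omega) fun m h1 h2 => by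
        simpa [show m + s + 1 ≠ 0 by omega, show ¬ m + s + 1 ≤ s by omega,
          show m + s + 1 - s - 1 = m by omega] using hrun (m + s + 1) (by omega) (by omega)
    · have hp0 : p ≠ 0 := fun h => by simpa [h] using hrun 0 (by omega) (by omega)
      refine Or.inr ⟨s, hs, ?_⟩
      by_contra hlt
      have h1 := hrun (s + 1) (by omega) (by omega)
      simp only [show s + 1 ≠ 0 by omega, show ¬ s + 1 ≤ s by omega, if_false,
        show s + 1 - s - 1 = 0 by omega] at h1
      rw [getD_flatten_blocks_zero hbs (by omega)] at h1
      exact Bool.false_ne_true h1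

lemma exists_blocks_of_mem {w : List Bool} (h : w ∈ SgapLang S) :
    ∃ (l : List (List Bool)) (u v : List Bool),
      (∀ b ∈ l, b ∈ SgapBlocks S) ∧ l.flatten = u ++ w ++ v := by
  obtain ⟨u, v, c, ⟨l, hl, rfl⟩, hc⟩ := h
  exact ⟨l, u, v, hl, hc⟩

lemma getD_infix {c u w v : List Bool} (hc : c = u ++ w ++ v) {t : ℕ} (ht : t < w.length) :
    c.getD (u.length + t) true = w.getD t true := by
  rw [hc, List.getD_append _ _ _ _ (by simp; omega), List.getD_append_right _ _ _ _ (by omega)]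
  simp

lemma hasGapsIn_of_mem (hx : x ∈ Sgap S) : HasGapsIn S x := by
  intro i j hij hi hj hbet
  obtain ⟨n, rfl⟩ : ∃ n : ℕ, j = i + n := ⟨(j - i).toNat, by omega⟩
  obtain ⟨l, u, v, hl, hc⟩ := exists_blocks_of_mem (hx i (n + 1))
  have hlen : l.flatten.length = u.length + (n + 1) + v.length := by simp [hc]; omega
  have hw : ∀ t ≤ n, l.flatten.getD (u.length + t) true = x (i + t) := fun t ht => by
    rw [getD_infix hc (by simp; omega), getD_cfgWord _ _ (by omega)]
  have key := gap_mem_of_flatten_blocks hl (p := u.length) (q := u.length + n) (by omega)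
    (by omega) (by simpa [hi] using hw 0 (by omega)) (by rw [hw n le_rfl]; exact hj)
    (fun m h1 h2 => by
      obtain ⟨t, rfl⟩ : ∃ t, m = u.length + t := ⟨m - u.length, by omega⟩
      rw [hw t (by omega)]
      exact hbet _ (by omega) (by omega))
  rwa [show (i + n - i - 1).toNat = u.length + n - u.length - 1 by omega]

lemma hasRunsBoundedBy_of_mem (hS : S.Nonempty) (hx : x ∈ Sgap S) : HasRunsBoundedBy S x := by
  intro i L hrun
  obtain ⟨l, u, v, hl, hc⟩ := exists_blocks_of_mem (hx i L)
  have hlen : l.flatten.length = u.length + L + v.length := by simp [hc]; omega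
  rcases run_le_of_flatten_blocks hl (p := u.length) (L := L) (by omega) (fun m h1 h2 => by
    obtain ⟨t, rfl⟩ : ∃ t, m = u.length + t := ⟨m - u.length, by omega⟩
    rw [getD_infix hc (by simp; omega), getD_cfgWord _ _ (by omega)]
    exact hrun t (by omega)) with rfl | h
  · obtain ⟨s, hs⟩ := hS
    exact ⟨s, hs, Nat.zero_le s⟩
  · exact h

lemma exists_blocks_prefix (hg : HasGapsIn S x) (hr : HasRunsBoundedBy S x) (k : ℕ) :
    ∀ i, x i = false → ∃ (l : List (List Bool)) (v : List Bool),
      (∀ b ∈ l, b ∈ SgapBlocks S) ∧ l.flatten = cfgWord x i k ++ v := by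
  induction k using Nat.strong_induction_on with
  | _ k ih =>
  intro i hi
  rcases k with _ | k
  · exact ⟨[], [], by simp, by simp [cfgWord]⟩
  by_cases hz : ∃ t : ℕ, t < k ∧ x (i + 1 + t) = false
  · classical
    obtain ⟨ht, hzero⟩ := Nat.find_spec hz
    set t := Nat.find hz
    have hone : ∀ n < t, x (i + 1 + n) = true := fun n hn =>
      Bool.not_eq_false _ ▸ fun h => Nat.find_min hz hn ⟨by omega, h⟩
    have hgap : t ∈ S := by
      have := hg i (i + 1 + t) (by omega) hi hzero fun m h1 h2 => by
        obtain ⟨n, rfl⟩ : ∃ n : ℕ, m = i + 1 + n := ⟨(m - i - 1).toNat, by omega⟩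
        exact hone n (by omega)
      rwa [show (i + 1 + t - i - 1).toNat = t by omega] at this
    obtain ⟨l, v, hl, hc⟩ := ih (k - t) (by omega) (i + 1 + t) hzero
    refine ⟨(false :: List.replicate t true) :: l, v, ?_, ?_⟩
    · exact List.forall_mem_cons.2 ⟨⟨t, hgap, rfl⟩, hl⟩
    · rw [cfgWord_succ, show k = t + (k - t) by omega, cfgWord_add,
        cfgWord_eq_replicate _ _ _ _ hone, hi, List.flatten_cons, hc]
      simp
  · push Not at hz
    have hone : ∀ n < k, x (i + 1 + n) = true := fun n hn => Bool.not_eq_false _ ▸ hz n hn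
    obtain ⟨s, hs, hks⟩ := hr (i + 1) k hone
    refine ⟨[false :: List.replicate s true], List.replicate (s - k) true, ?_, ?_⟩
    · exact List.forall_mem_singleton.2 ⟨s, hs, rfl⟩
    · rw [cfgWord_succ, cfgWord_eq_replicate _ _ _ _ hone, hi]
      obtain ⟨e, rfl⟩ : ∃ e, s = k + e := ⟨s - k, by omega⟩
      simp

lemma mem_of_hasGapsIn (hg : HasGapsIn S x) (hr : HasRunsBoundedBy S x) : x ∈ Sgap S := by
  intro i k
  by_cases hz : ∃ t : ℕ, t < k ∧ x (i + t) = false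
  · classical
    obtain ⟨ht, hzero⟩ := Nat.find_spec hz
    set t := Nat.find hz
    have hone : ∀ n < t, x (i + n) = true := fun n hn =>
      Bool.not_eq_false _ ▸ fun h => Nat.find_min hz hn ⟨by omega, h⟩
    obtain ⟨l, v, hl, hc⟩ := exists_blocks_prefix hg hr (k - t) (i + t) hzero
    obtain ⟨s, hs, hts⟩ := hr i t hone
    refine ⟨false :: List.replicate (s - t) true, v, _,
      ⟨(false :: List.replicate s true) :: l, ?_, rfl⟩, ?_⟩
    · exact List.forall_mem_cons.2 ⟨⟨s, hs, rfl⟩, hl⟩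
    · rw [List.flatten_cons, hc, show k = t + (k - t) by omega, cfgWord_add,
        cfgWord_eq_replicate _ _ _ _ hone]
      obtain ⟨e, rfl⟩ : ∃ e, s = e + t := ⟨s - t, by omega⟩
      simp [← List.append_assoc]
  · push Not at hz
    have hone : ∀ n < k, x (i + n) = true := fun n hn => Bool.not_eq_false _ ▸ hz n hn
    obtain ⟨s, hs, hks⟩ := hr i k hone
    refine ⟨false :: List.replicate (s - k) true, [], _,
      ⟨[false :: List.replicate s true], List.forall_mem_singleton.2 ⟨s, hs, rfl⟩, rfl⟩, ?_⟩
    rw [cfgWord_eq_replicate _ _ _ _ hone]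
    obtain ⟨e, rfl⟩ : ∃ e, s = e + k := ⟨s - k, by omega⟩
    simp

theorem mem_iff (hS : S.Nonempty) : x ∈ Sgap S ↔ HasGapsIn S x ∧ HasRunsBoundedBy S x :=
  ⟨fun h => ⟨hasGapsIn_of_mem h, hasRunsBoundedBy_of_mem hS h⟩,
    fun h => mem_of_hasGapsIn h.1 h.2⟩

end Language

section Points

variable {x y : ℤ → Bool}

lemma shiftInvariant : ShiftInvariant (Sgap S) := by
  intro x hx n i k
  rw [cfgWord_congr (x' := x) (i' := i + n) fun t _ => by simp only [translate_apply]; ring_nf]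
  exact hx (i + n) k

lemma mem_of_forall_eqOn (h : ∀ n : ℕ, ∃ y ∈ Sgap S, ∀ i : ℤ, |i| ≤ n → y i = x i) :
    x ∈ Sgap S := by
  intro i k
  obtain ⟨y, hy, hyx⟩ := h (i.natAbs + k)
  rw [← cfgWord_congr (x := y) (i' := i) fun t _ =>
    hyx (i + t) (by rw [Int.abs_eq_natAbs]; omega)]
  exact hy i k

lemma hasGapsIn_of_subsingleton (h : ∀ i j, x i = false → x j = false → i = j) :
    HasGapsIn S x :=
  fun i j hij hi hj _ => absurd (h i j hi hj) hij.ne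

lemma mem_of_not_bddAbove (hU : ¬ BddAbove S) (hg : HasGapsIn S x) : x ∈ Sgap S :=
  mem_of_hasGapsIn hg fun _ L _ => by
    obtain ⟨s, hs, hLs⟩ := not_bddAbove_iff.1 hU L
    exact ⟨s, hs, hLs.le⟩

lemma const_true_mem (hU : ¬ BddAbove S) : (fun _ => true) ∈ Sgap S :=
  mem_of_not_bddAbove hU (hasGapsIn_of_subsingleton fun i _ hi => by simp at hi)

lemma zeroAt_mem (hU : ¬ BddAbove S) (p : ℤ) : zeroAt p ∈ Sgap S :=
  mem_of_not_bddAbove hU (hasGapsIn_of_subsingleton fun i j hi hj => by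
    simp only [zeroAt, decide_eq_false_iff_not, not_not] at hi hj
    rw [hi, hj])

lemma restrict_mem (hU : ¬ BddAbove S) (hx : x ∈ Sgap S) (K : ℕ) :
    (fun i : ℤ => if |i| ≤ K then x i else true) ∈ Sgap S := by
  refine mem_of_not_bddAbove hU fun i j hij hi hj hbet => ?_
  have hiK : |i| ≤ K := by by_contra h; simp [h] at hi
  have hjK : |j| ≤ K := by by_contra h; simp [h] at hj
  have hin : ∀ m, i ≤ m → m ≤ j → |m| ≤ K := fun m h1 h2 => by
    rw [abs_le] at hiK hjK ⊢; omega
  simp only [hiK, hjK, if_true] at hi hj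
  exact hasGapsIn_of_mem hx i j hij hi hj fun m h1 h2 => by
    simpa [hin m h1.le h2.le] using hbet m h1 h2

/-- `0` is a synchronizing word: points of `X_S` can be spliced at a common `0`. -/
lemma splice_mem (hS : S.Nonempty) (hx : x ∈ Sgap S) (hy : y ∈ Sgap S) {p : ℤ}
    (hxp : x p = false) (hyp : y p = false) :
    (fun i => if i ≤ p then x i else y i) ∈ Sgap S := by
  rw [mem_iff hS] at hx hy ⊢
  set z : ℤ → Bool := fun i => if i ≤ p then x i else y i
  have hzx : ∀ i ≤ p, z i = x i := fun i hi => if_pos hi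
  have hzy : ∀ i, p ≤ i → z i = y i := fun i hi => by
    rcases hi.lt_or_eq with hi | rfl
    · exact if_neg (not_le.2 hi)
    · exact (if_pos le_rfl).trans (hxp.trans hyp.symm)
  have hzp : z p = false := (hzx p le_rfl).trans hxp
  refine ⟨fun i j hij hi hj hbet => ?_, fun i L hrun => ?_⟩
  · by_cases hjp : j ≤ p
    · exact hx.1 i j hij ((hzx i (by omega)).symm.trans hi) ((hzx j hjp).symm.trans hj)
        fun m h1 h2 => (hzx m (by omega)).symm.trans (hbet m h1 h2)
    · have hip : p ≤ i := by
        by_contra h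
        simpa [hzp] using hbet p (by omega) (by omega)
      exact hy.1 i j hij ((hzy i hip).symm.trans hi) ((hzy j (by omega)).symm.trans hj)
        fun m h1 h2 => (hzy m (by omega)).symm.trans (hbet m h1 h2)
  · by_cases hiL : i + L ≤ p
    · exact hx.2 i L fun t ht => (hzx _ (by omega)).symm.trans (hrun t ht)
    · have hip : p < i := by
        by_contra h
        have := hrun (p - i).toNat (by omega)
        rw [show i + ((p - i).toNat : ℤ) = p by omega, hzp] at this
        exact Bool.false_ne_true this
      exact hy.2 i L fun t ht => (hzy _ (by omega)).symm.trans (hrun t ht)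

end Points

section FollowerSets

variable {x x' : ℤ → Bool}

lemma foll_subset_of_lastZeroAt (hS : S.Nonempty) (hx' : x' ∈ Sgap S) {k : ℕ}
    (h : LastZeroAt (leftRay x) k) (h' : LastZeroAt (leftRay x') k) :
    foll (Sgap S) (leftRay x) ⊆ foll (Sgap S) (leftRay x') := fun r hr => by
  have hsplice := splice_mem hS hx' hr (p := -1 - k) h'.1
    ((glue_leftRay_of_neg _ _ (by omega)).trans h.1)
  show glue (leftRay x') r ∈ Sgap S
  convert hsplice using 1
  funext i
  by_cases hik : i ≤ -1 - k
  · rw [if_pos hik, glue_leftRay_of_neg _ _ (by omega)]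
  rw [if_neg hik]
  by_cases hi : i < 0
  · rw [glue_leftRay_of_neg _ _ hi, glue_leftRay_of_neg _ _ hi]
    obtain ⟨n, rfl⟩ : ∃ n : ℕ, i = -1 - n := ⟨(-1 - i).toNat, by omega⟩
    exact (h'.2 n (by omega)).trans (h.2 n (by omega)).symm
  · rw [glue_of_nonneg _ _ (not_lt.1 hi), glue_of_nonneg _ _ (not_lt.1 hi)]

lemma foll_eq_of_lastZeroAt (hS : S.Nonempty) (hx : x ∈ Sgap S) (hx' : x' ∈ Sgap S) {k : ℕ}
    (h : LastZeroAt (leftRay x) k) (h' : LastZeroAt (leftRay x') k) :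
    foll (Sgap S) (leftRay x) = foll (Sgap S) (leftRay x') :=
  (foll_subset_of_lastZeroAt hS hx' h h').antisymm (foll_subset_of_lastZeroAt hS hx h' h)

lemma foll_zeroAt_subset (hU : ¬ BddAbove S) {k k' : ℕ} (h : ∀ m, k + m ∈ S → k' + m ∈ S) :
    foll (Sgap S) (leftRay (zeroAt (-1 - k))) ⊆ foll (Sgap S) (leftRay (zeroAt (-1 - k'))) := by
  intro r hr
  have hg := hasGapsIn_of_mem hr
  refine mem_of_not_bddAbove hU fun i j hij hi hj hbet => ?_
  have hneg : ∀ m < 0, glue (leftRay (zeroAt (-1 - k'))) r m = false → m = -1 - k' :=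
    fun m hm h => by simpa [glue_leftRay_of_neg _ _ hm, zeroAt] using h
  by_cases hi0 : 0 ≤ i
  · have hsame : ∀ m, 0 ≤ m → glue (leftRay (zeroAt (-1 - k'))) r m =
        glue (leftRay (zeroAt (-1 - k))) r m := fun m hm => by
      rw [glue_of_nonneg _ _ hm, glue_of_nonneg _ _ hm]
    exact hg i j hij ((hsame i hi0).symm.trans hi) ((hsame j (by omega)).symm.trans hj)
      fun m h1 h2 => (hsame m (by omega)).symm.trans (hbet m h1 h2)
  obtain rfl := hneg i (by omega) hi
  have hj0 : 0 ≤ j := by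
    by_contra h
    exact hij.ne (hneg j (by omega) hj).symm
  obtain ⟨n, rfl⟩ : ∃ n : ℕ, j = n := ⟨j.toNat, by omega⟩
  have hrn : r n = false := by simpa using hj
  have hrm : ∀ m < n, r m = true := fun m hm => by simpa using hbet m (by omega) (by omega)
  have key := hg (-1 - k) n (by omega) (by rw [glue_leftRay_of_neg _ _ (by omega)]; simp [zeroAt])
    (by simpa using hrn)
    fun m h1 h2 => by
      rcases lt_or_ge m 0 with hm | hm
      · simp [glue_leftRay_of_neg _ _ hm, zeroAt]; omega
      · obtain ⟨t, rfl⟩ : ∃ t : ℕ, m = t := ⟨m.toNat, by omega⟩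
        simpa using hrm t (by omega)
  rw [show ((n : ℤ) - (-1 - k) - 1).toNat = k + n by omega] at key
  rw [show ((n : ℤ) - (-1 - k') - 1).toNat = k' + n by omega]
  exact h n key

def follOfLastZeroAt (S : Set ℕ) (k : ℕ) : Set (Set (ℕ → Bool)) :=
  {v | ∃ x ∈ Sgap S, LastZeroAt (leftRay x) k ∧ v = foll (Sgap S) (leftRay x)}

lemma follOfLastZeroAt_subsingleton (hS : S.Nonempty) (k : ℕ) :
    (follOfLastZeroAt S k).Subsingleton := by
  rintro _ ⟨x, hx, h, rfl⟩ _ ⟨x', hx', h', rfl⟩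
  exact foll_eq_of_lastZeroAt hS hx hx' h h'

lemma not_bddAbove_of_periodic {j d s : ℕ} (hd : 0 < d) (hper : ∀ k ≥ j, k ∈ S ↔ k + d ∈ S)
    (hs : s ∈ S) (hjs : j ≤ s) : ¬ BddAbove S := by
  have hmem : ∀ n : ℕ, s + n * d ∈ S := fun n => by
    induction n with
    | zero => simpa using hs
    | succ n ih => simpa [add_mul, add_assoc] using (hper _ (by omega)).1 ih
  rw [not_bddAbove_iff]
  exact fun b => ⟨s + (b + 1) * d, hmem _, by nlinarith⟩

lemma follOfLastZeroAt_add_subset (hS : S.Nonempty) {j d k : ℕ} (hd : 0 < d)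
    (hper : ∀ k ≥ j, k ∈ S ↔ k + d ∈ S) (hk : j ≤ k) :
    follOfLastZeroAt S (k + d) ⊆ follOfLastZeroAt S k := by
  rintro _ ⟨x, hx, h, rfl⟩
  by_cases hU : BddAbove S
  · exfalso
    obtain ⟨s, hs, hks⟩ := hasRunsBoundedBy_of_mem hS hx (-(k + d : ℕ)) (k + d) fun t ht => by
      simpa [leftRay, show -1 - ((k + d - 1 - t : ℕ) : ℤ) = -(k + d : ℕ) + t by omega] using
        h.2 (k + d - 1 - t) (by omega)
    exact not_bddAbove_of_periodic hd hper hs (by omega) hU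
  · have hshift : ∀ m, k + d + m ∈ S ↔ k + m ∈ S := fun m => by
      rw [show k + d + m = k + m + d by ring]
      exact (hper _ (by omega)).symm
    refine ⟨_, zeroAt_mem hU _, lastZeroAt_leftRay_zeroAt k, ?_⟩
    rw [foll_eq_of_lastZeroAt hS hx (zeroAt_mem hU _) h (lastZeroAt_leftRay_zeroAt _)]
    exact (foll_zeroAt_subset hU fun m => (hshift m).1).antisymm
      (foll_zeroAt_subset hU fun m => (hshift m).2)

theorem sofic_of_eventuallyPeriodic (hS : S.Nonempty) (h : EventuallyPeriodic S) :
    Sofic (Sgap S) := by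
  obtain ⟨j, d, hd, hper⟩ := h
  have hreduce : ∀ k, follOfLastZeroAt S k ⊆ ⋃ k' ∈ Set.Iio (j + d), follOfLastZeroAt S k' := by
    intro k
    induction k using Nat.strong_induction_on with
    | _ k ih =>
    by_cases hk : k < j + d
    · exact Set.subset_biUnion_of_mem (u := follOfLastZeroAt S) hk
    · obtain ⟨k', rfl⟩ : ∃ k', k = k' + d := ⟨k - d, by omega⟩
      exact (follOfLastZeroAt_add_subset hS hd hper (by omega)).trans (ih k' (by omega))
  refine (((Set.finite_Iio (j + d)).biUnion fun k _ =>
    (follOfLastZeroAt_subsingleton hS k).finite).insert (foll (Sgap S) fun _ => true)).subset ?_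
  rintro _ ⟨_, ⟨x, hx, rfl⟩, rfl⟩
  rcases lastZeroAt_or_eq_true (leftRay x) with ⟨k, hk⟩ | h
  · exact Set.mem_insert_of_mem _ (hreduce k ⟨x, hx, hk, rfl⟩)
  · rw [h]
    exact Set.mem_insert _ _

lemma not_bddAbove_of_not_sofic (hS : S.Nonempty) (hns : ¬ Sofic (Sgap S)) : ¬ BddAbove S := by
  rintro ⟨b, hb⟩
  refine hns (sofic_of_eventuallyPeriodic hS ⟨b + 1, 1, one_pos, fun k hk => ?_⟩)
  exact iff_of_false (fun h => by have := hb h; omega) (fun h => by have := hb h; omega)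

end FollowerSets

section FischerGraph

lemma eq_of_kEdge_false (hS : S.Nonempty) {u u' v v' : Set (ℕ → Bool)}
    (h : KEdge (Sgap S) u false v) (h' : KEdge (Sgap S) u' false v') : v = v' := by
  obtain ⟨l, -, ⟨z, hz, hzl⟩, -, rfl⟩ := h
  obtain ⟨l', -, ⟨z', hz', hzl'⟩, -, rfl⟩ := h'
  rw [← hzl, ← hzl']
  exact foll_eq_of_lastZeroAt hS hz hz' (hzl ▸ lastZeroAt_extendRay_false l)
    (hzl' ▸ lastZeroAt_extendRay_false l')

lemma eventually_label_true_of_evGeodesic (hS : S.Nonempty) {w : List Bool}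
    {x : ℤ → FischerE (Sgap S) w} (hx : BiPath (FischerGraph (Sgap S) w) x)
    (hgeo : EvGeodesic (FischerGraph (Sgap S) w) x) :
    ∃ J : ℕ, ∀ i : ℤ, J ≤ i → (x i).1.2.1 = true := by
  obtain ⟨i₀, hinj⟩ := hgeo.eventually_ini_injective
  have hter : ∀ i j, (x i).1.2.1 = false → (x j).1.2.1 = false →
      (FischerGraph (Sgap S) w).ini (x (i + 1)) = (FischerGraph (Sgap S) w).ini (x (j + 1)) :=
    fun i j hi hj => by
      rw [← hx i, ← hx j]
      exact eq_of_kEdge_false hS (hi ▸ (x i).2.2.2) (hj ▸ (x j).2.2.2)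
  by_cases h : ∃ j, i₀ ≤ j ∧ (x j).1.2.1 = false
  · obtain ⟨j, hj, hjf⟩ := h
    refine ⟨(j + 1).toNat, fun i hi => Bool.not_eq_false _ ▸ fun hif => ?_⟩
    exact hinj (j + 1) (i + 1) (by omega) (by omega) (hter j i hjf hif)
  · push Not at h
    exact ⟨i₀.toNat, fun i hi => Bool.not_eq_false _ ▸ h i (by omega)⟩

theorem not_hasEvGeoProxPair (hS : S.Nonempty) (w : List Bool) :
    ¬ HasEvGeoProxPair (FischerGraph (Sgap S) w) := by
  rintro ⟨x, y, hx, hy, hgx, hgy, hagree, hdiff⟩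
  obtain ⟨Jx, hJx⟩ := eventually_label_true_of_evGeodesic hS hx hgx
  obtain ⟨Jy, hJy⟩ := eventually_label_true_of_evGeodesic hS hy hgy
  obtain ⟨p, hp⟩ := hagree (Jx + Jy)
  have hsame := BiPath.eqOn_of_label_eq shiftInvariant hx hy
    (hp (Jx + Jy) le_rfl) fun i hi => by rw [hJx i (by omega), hJy i (by omega)]
  obtain ⟨i, hi, hne⟩ := hdiff (p + Jx + Jy)
  exact hne (hsame i (by omega))

end FischerGraph

section DirectPrime

lemma eq_of_forall_finite_zeros (hU : ¬ BddAbove S) {B : Type*} {Φ : (ℤ → Bool) → ℤ → B}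
    (hΦ : SlidingBlockCode (Sgap S) Φ) {w : ℤ → B}
    (h : ∀ x ∈ Sgap S, (∃ K : ℕ, ∀ i : ℤ, K < |i| → x i = true) → Φ x = w) :
    ∀ x ∈ Sgap S, Φ x = w := by
  intro x hx
  obtain ⟨r, hr⟩ := hΦ.exists_radius
  funext i
  have hx' := restrict_mem hU hx (i.natAbs + r)
  rw [hr x hx _ hx' i fun m hm => ?_, h _ hx' ⟨i.natAbs + r, fun m hm => if_neg (not_le.2 hm)⟩]
  rw [if_pos (by rw [Int.abs_eq_natAbs] at *; omega)]

lemma exists_homoclinic_of_ne_singleton (hU : ¬ BddAbove S) {B : Type*}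
    {Φ : (ℤ → Bool) → ℤ → B} (hΦ : SlidingBlockCode (Sgap S) Φ) {W : Set (ℤ → B)}
    (himage : Φ '' Sgap S = W) (hW : ∀ w, W ≠ {w}) :
    ∃ w ∈ W, w ≠ Φ (fun _ => true) ∧ ∃ K : ℕ, ∀ i : ℤ, K < |i| → w i = Φ (fun _ => true) i := by
  by_contra! hcon
  obtain ⟨r, hr⟩ := hΦ.exists_radius
  have hconst : ∀ x ∈ Sgap S, Φ x = Φ (fun _ => true) :=
    eq_of_forall_finite_zeros hU hΦ fun x hx ⟨K, hK⟩ => by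
      by_contra hne
      obtain ⟨i, hi, hne'⟩ := hcon (Φ x) (himage ▸ Set.mem_image_of_mem Φ hx) hne (K + r)
      exact hne' (hr x hx _ (const_true_mem hU) i fun m hm =>
        hK m (by rw [Int.abs_eq_natAbs] at *; omega))
  apply hW (Φ fun _ => true)
  rw [← himage, Set.eq_singleton_iff_unique_mem]
  exact ⟨⟨_, const_true_mem hU, rfl⟩, fun _ ⟨x, hx, hxw⟩ => hxw ▸ hconst x hx⟩

lemma exists_first_zero {x : ℤ → Bool} (hx : x ≠ fun _ => true) {M : ℕ}
    (hM : ∀ j : ℤ, M < |j| → x j = true) : ∃ α : ℤ, |α| ≤ M ∧ x α = false ∧ ∀ j < α, x j = true := by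
  have hz : ∃ j, x j = false := by
    by_contra! h
    exact hx (funext fun j => by simpa using h j)
  obtain ⟨α, hα, hmin⟩ := Int.exists_least_of_bdd ⟨-M, fun j hj => not_lt.1 fun h => by
    simp [hM j (by rw [Int.abs_eq_natAbs]; omega)] at hj⟩ hz
  exact ⟨α, not_lt.1 fun h => by simp [hM α h] at hα, hα,
    fun j hj => Bool.not_eq_false _ ▸ fun h => absurd (hmin j h) (not_le.2 hj)⟩

lemma exists_last_zero {x : ℤ → Bool} (hx : x ≠ fun _ => true) {M : ℕ}
    (hM : ∀ j : ℤ, M < |j| → x j = true) : ∃ γ : ℤ, |γ| ≤ M ∧ x γ = false ∧ ∀ j > γ, x j = true := by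
  have hz : ∃ j, x j = false := by
    by_contra! h
    exact hx (funext fun j => by simpa using h j)
  obtain ⟨γ, hγ, hmax⟩ := Int.exists_greatest_of_bdd ⟨M, fun j hj => not_lt.1 fun h => by
    simp [hM j (by rw [Int.abs_eq_natAbs]; omega)] at hj⟩ hz
  exact ⟨γ, not_lt.1 fun h => by simp [hM γ h] at hγ, hγ,
    fun j hj => Bool.not_eq_false _ ▸ fun h => absurd (hmax j h) (not_le.2 hj)⟩

/-- The gap between the last `0` of `xL` and the first `0` of the copy of `xR` translated by `N`
has length `N + const`. -/
lemma forall_ge_mem_of_exists_splices {xL xR : ℤ → Bool} {M : ℕ}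
    (hL : xL ≠ fun _ => true) (hR : xR ≠ fun _ => true)
    (hLM : ∀ j : ℤ, M < |j| → xL j = true) (hRM : ∀ j : ℤ, M < |j| → xR j = true)
    (hsplice : ∀ N : ℕ, ∃ x ∈ Sgap S,
      (∀ j : ℤ, j ≤ N - M → x j = xL j) ∧ ∀ j : ℤ, M ≤ j → x j = xR (j - N)) :
    ∀ n ≥ 4 * M + 2, n ∈ S := by
  obtain ⟨γ, hγM, hγ, hγmax⟩ := exists_last_zero hL hLM
  obtain ⟨α, hαM, hα, hαmin⟩ := exists_first_zero hR hRM
  intro n hn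
  rw [abs_le] at hαM hγM
  obtain ⟨N, hN⟩ : ∃ N : ℕ, (N : ℤ) = n + 1 + γ - α := ⟨(n + 1 + γ - α).toNat, by omega⟩
  obtain ⟨x, hx, hxL, hxR⟩ := hsplice N
  have key := hasGapsIn_of_mem hx γ (N + α) (by omega) ((hxL γ (by omega)).trans hγ)
    ((hxR _ (by omega)).trans (by rwa [add_sub_cancel_left])) fun m h1 h2 => by
      by_cases hm : m ≤ N - M
      · exact (hxL m hm).trans (hγmax m h1)
      · exact (hxR m (by omega)).trans (hαmin _ (by omega))
  rwa [show (N + α - γ - 1).toNat = n by omega] at key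

section Conjugacy

variable {B C : Type*} {Y : Set (ℤ → B)} {Z : Set (ℤ → C)}
  {F : (ℤ → Bool) → ℤ → B × C}

/-- `xL`, `xR` and the splices are the preimages of `(b, z)`, `(y, c)` and `(y (· - N), z)`. -/
lemma forall_ge_mem_of_homoclinic (hU : ¬ BddAbove S) (hF : SlidingBlockCode (Sgap S) F) {R : ℕ}
    (hR : ∀ x ∈ Sgap S, ∀ x' ∈ Sgap S, ∀ j : ℤ, (∀ i, |i - j| ≤ R → F x i = F x' i) → x j = x' j)
    (himage : F '' Sgap S = prodShift Y Z) (hY : IsSubshift Y) {b : B} {c : C}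
    (hone : F (fun _ => true) = fun _ => (b, c)) {y : ℤ → B} {z : ℤ → C} (hy : y ∈ Y) (hz : z ∈ Z)
    (hyb : y ≠ fun _ => b) (hzc : z ≠ fun _ => c) {K : ℕ} (hyK : ∀ i : ℤ, K < |i| → y i = b)
    (hzK : ∀ i : ℤ, K < |i| → z i = c) : ∀ n ≥ 4 * (K + R + 1) + 2, n ∈ S := by
  have h1 := const_true_mem hU
  have hpre : ∀ u ∈ prodShift Y Z, ∃ x ∈ Sgap S, F x = u := fun u hu => by
    rwa [← himage] at hu
  have hbc : (fun _ => (b, c)) ∈ prodShift Y Z := hone ▸ himage ▸ Set.mem_image_of_mem F h1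
  obtain ⟨xR, hxR, hFR⟩ := hpre (fun i => (y i, c)) ⟨hy, hbc.2⟩
  obtain ⟨xL, hxL, hFL⟩ := hpre (fun i => (b, z i)) ⟨hbc.1, hz⟩
  have htrue : ∀ x ∈ Sgap S, (∀ i : ℤ, K < |i| → F x i = (b, c)) →
      ∀ j : ℤ, K + R + 1 < |j| → x j = true := fun x hx hK j hj =>
    hR x hx _ h1 j fun i hi => by rw [hK i (by rw [Int.abs_eq_natAbs] at *; omega), hone]
  refine forall_ge_mem_of_exists_splices (xL := xL) (xR := xR)
    (fun h => hzc (funext fun i => by simpa [h, hone] using (congrFun hFL i).symm))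
    (fun h => hyb (funext fun i => by simpa [h, hone] using (congrFun hFR i).symm))
    (htrue xL hxL fun i hi => by simp only [hFL, hzK i hi])
    (htrue xR hxR fun i hi => by simp only [hFR, hyK i hi]) fun N => ?_
  have hyN : (fun i => y (i - N)) ∈ Y := by
    convert hY.shiftInvariant y hy (-N) using 1
    funext i
    simp [sub_eq_add_neg]
  obtain ⟨x, hx, hFx⟩ := hpre (fun i => (y (i - N), z i)) ⟨hyN, hz⟩
  have hxRN := shiftInvariant xR hxR (-N)
  refine ⟨x, hx, fun j hj => hR _ hx _ hxL j fun i hi => ?_, fun j hj => ?_⟩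
  · simp only [hFx, hFL, hyK (i - N) (by rw [Int.abs_eq_natAbs] at *; omega)]
  · have key := hR _ hx _ hxRN j fun i hi => by
      simp only [hFx, hF.apply_translate hxR hxRN, translate_apply, hFR,
        hzK i (by rw [Int.abs_eq_natAbs] at *; omega), sub_eq_add_neg]
    simpa [sub_eq_add_neg] using key

end Conjugacy

theorem directPrime (hS : S.Nonempty) (hns : ¬ Sofic (Sgap S)) : DirectPrime (Sgap S) := by
  have hU := not_bddAbove_of_not_sofic hS hns
  intro B C _ _ Y Z hY hZ ⟨F, hF, hinj, himage⟩
  by_contra! hnt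
  obtain ⟨R, hR⟩ := hF.exists_radius_of_injOn hinj (fun _ h => mem_of_forall_eqOn h)
    shiftInvariant
  obtain ⟨⟨b, c⟩, hone⟩ := hF.apply_const (const_true_mem hU)
  have himY : (fun x i => (F x i).1) '' Sgap S = Y := by
    rw [← image_fst_prodShift (Y := Y) hZ.1, ← himage, Set.image_image]
  have himZ : (fun x i => (F x i).2) '' Sgap S = Z := by
    rw [← image_snd_prodShift (Z := Z) hY.1, ← himage, Set.image_image]
  obtain ⟨y, hy, hyb, Ky, hyK⟩ := exists_homoclinic_of_ne_singleton hU (hF.comp Prod.fst) himY hnt.1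
  obtain ⟨z, hz, hzc, Kz, hzK⟩ := exists_homoclinic_of_ne_singleton hU (hF.comp Prod.snd) himZ hnt.2
  simp only [hone] at hyb hyK hzc hzK
  have hcofinite := forall_ge_mem_of_homoclinic hU hF hR himage hY hone hy hz hyb hzc
    (K := Ky + Kz) (fun i hi => hyK i (by omega)) (fun i hi => hzK i (by omega))
  exact hns (sofic_of_eventuallyPeriodic hS
    ⟨_, 1, one_pos, fun k hk => iff_of_true (hcofinite k hk) (hcofinite _ (by omega))⟩)

end DirectPrime

end Sgap

theorem stmt15 (S : Set ℕ) (hS : S.Nonempty) (hns : ¬ Sofic (Sgap S)) :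
    ¬ HasEvGeoProxPair (FischerGraph (Sgap S) [false]) ∧ DirectPrime (Sgap S) :=
  ⟨Sgap.not_hasEvGeoProxPair hS [false], Sgap.directPrime hS hns⟩

end Paper
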